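/- Let w1 and w2 be distinct elements of W^S of equal length, l(w1) = l(w2). Then w1.0 − w2.0 is not a nonnegative integer linear combination of the simple roots in S, i.e. w1.0 − w2.0 ∉ Q_S^+. (Corollary on incomparability of the weights w.0, part 2.) -/

import Mathlib

/-!
Put `μ = w₁ρ - w₂ρ`. For `j ∈ S` the root `w₂⁻¹ α_j` is positive because `w₂ ∈ W^S`, so
`⟪w₂ρ, α_j⟫ > 0`, and hence `⟪w₂ρ, μ⟫ ≥ 0` when `μ ∈ Q_S^+`. As `‖w₁ρ‖ = ‖w₂ρ‖`, expanding
`‖w₂ρ + μ‖²` forces `μ = 0`. Finally `ρ` has trivial stabilizer in `W`: an element fixing `ρ`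
keeps every positive root positive, so the exchange condition shortens any word for it down to
the empty word. Thus `w₁ = w₂`.
-/

open scoped RealInnerProductSpace

noncomputable section

/-- The pairing of a weight with the coroot `β^∨ = 2β/(β,β)` of a vector `β`:
`⟨lam, β^∨⟩ = 2(lam,β)/(β,β)`. -/
def copair {V : Type*} [NormedAddCommGroup V] [InnerProductSpace ℝ V] (lam β : V) : ℝ :=
  2 * ⟪lam, β⟫ / ⟪β, β⟫

/-- A finite reduced crystallographic root system together with a fixed base of
simple roots, realized in a finite-dimensional real inner product space. -/
structure BasedRootSystem (V : Type*) [NormedAddCommGroup V] [InnerProductSpace ℝ V]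
    [FiniteDimensional ℝ V] where
  /-- the (finite) set of roots -/
  roots : Finset V
  /-- the number of simple roots -/
  rank : ℕ
  /-- the simple roots; they form a basis of the ambient space -/
  b : Module.Basis (Fin rank) ℝ V
  simple_mem : ∀ i, b i ∈ roots
  zero_not_mem : (0 : V) ∉ roots
  /-- the root system is reduced -/
  reduced : ∀ β ∈ roots, ∀ c : ℝ, c • β ∈ roots → c = 1 ∨ c = -1
  /-- the root system is crystallographic -/
  crystallographic : ∀ β ∈ roots, ∀ γ ∈ roots, ∃ n : ℤ, copair β γ = (n : ℝ)
  /-- the set of roots is stable under the reflection in (the hyperplane orthogonal to)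
  any root -/
  reflect_mem : ∀ β ∈ roots, ∀ γ ∈ roots, Submodule.reflection ((ℝ ∙ β)ᗮ) γ ∈ roots
  /-- each root is an integral linear combination of the simple roots -/
  coeff_int : ∀ β ∈ roots, ∀ i, ∃ n : ℤ, b.repr β i = (n : ℝ)
  /-- each root has either all coefficients nonnegative or all nonpositive -/
  coeff_sign : ∀ β ∈ roots, (∀ i, 0 ≤ b.repr β i) ∨ (∀ i, b.repr β i ≤ 0)

namespace BasedRootSystem

variable {V : Type*} [NormedAddCommGroup V] [InnerProductSpace ℝ V] [FiniteDimensional ℝ V]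
variable (P : BasedRootSystem V)

/-- the set `R⁺` of positive roots -/
def posRoots : Finset V :=
  (P.roots.finite_toSet.inter_of_left {β | ∀ i, 0 ≤ P.b.repr β i}).toFinset

/-- `ρ`, half the sum of the positive roots -/
def rho : V := (2 : ℝ)⁻¹ • ∑ β ∈ P.posRoots, β

/-- the simple reflection corresponding to the simple root `b i` -/
def sr (i : Fin P.rank) : V ≃ₗᵢ[ℝ] V := Submodule.reflection ((ℝ ∙ P.b i)ᗮ)

/-- the Weyl group, generated by the simple reflections -/
def weylGroup : Subgroup (V ≃ₗᵢ[ℝ] V) := Subgroup.closure (Set.range P.sr)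

/-- the length of a Weyl group element: the minimal number of factors in an
expression as a product of simple reflections -/
def len (w : V ≃ₗᵢ[ℝ] V) : ℕ :=
  sInf {n | ∃ f : Fin n → Fin P.rank, w = (List.ofFn fun k => P.sr (f k)).prod}

/-- the shifted (dot) action on the zero weight: `w.0 = wρ - ρ` -/
def dotZero (w : V ≃ₗᵢ[ℝ] V) : V := w P.rho - P.rho

/-- the sublattice `Q_S ⊆ Q` generated by the simple roots indexed by `S` -/
def QS (S : Set (Fin P.rank)) : AddSubgroup V := AddSubgroup.closure (P.b '' S)

/-- the positive cone `Q⁺` of nonnegative integer combinations of simple roots -/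
def Qplus : AddSubmonoid V := AddSubmonoid.closure (Set.range P.b)

/-- `W^S = {w ∈ W | R_S^+ ⊆ w R^+}` -/
def WS (S : Set (Fin P.rank)) : Set (V ≃ₗᵢ[ℝ] V) :=
  {w | w ∈ P.weylGroup ∧
    ∀ β ∈ P.posRoots, β ∈ P.QS S → ∃ γ ∈ P.posRoots, w γ = β}

/-- irreducibility of the root system: the base cannot be partitioned into two
nonempty mutually orthogonal subsets -/
def Irred : Prop :=
  ∀ A B : Set (Fin P.rank), A ∪ B = Set.univ →
    (∀ i ∈ A, ∀ j ∈ B, ⟪P.b i, P.b j⟫ = 0) → A = ∅ ∨ B = ∅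

/-- the weight lattice `P` -/
def weights : Set V := {lam | ∀ i, ∃ n : ℤ, copair lam (P.b i) = (n : ℝ)}

/-- the dominant integral weights `P⁺` -/
def domWeights : Set V := {lam | lam ∈ P.weights ∧ ∀ i, 0 ≤ copair lam (P.b i)}

/-- the weights `P_S^+` which are dominant and integral with respect to `S` -/
def domWeightsS (S : Set (Fin P.rank)) : Set V :=
  {lam | lam ∈ P.weights ∧ ∀ i ∈ S, 0 ≤ copair lam (P.b i)}

end BasedRootSystem

section Reflection

variable {V : Type*} [NormedAddCommGroup V] [InnerProductSpace ℝ V]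

theorem reflection_orthogonal_singleton_apply (v x : V) :
    Submodule.reflection (ℝ ∙ v)ᗮ x = x - copair x v • v := by
  rw [Submodule.reflection_orthogonal_apply, Submodule.reflection_singleton_apply, copair,
    real_inner_self_eq_norm_sq, real_inner_comm x v]
  norm_num [RCLike.ofReal_real_eq_id]
  module

theorem reflection_orthogonal_singleton_eq_conj (g : V ≃ₗᵢ[ℝ] V) {u v : V} (h : g u = v) :
    Submodule.reflection (ℝ ∙ v)ᗮ = g * Submodule.reflection (ℝ ∙ u)ᗮ * g⁻¹ := by
  subst h
  ext x
  change _ = g (Submodule.reflection (ℝ ∙ u)ᗮ (g.symm x))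
  rw [reflection_orthogonal_singleton_apply, reflection_orthogonal_singleton_apply, map_sub,
    map_smul, g.apply_symm_apply, copair, copair, g.inner_map_map, ← g.inner_map_map (g.symm x),
    g.apply_symm_apply]

theorem eq_of_norm_eq_of_inner_sub_nonneg {u v : V} (hnorm : ‖u‖ = ‖v‖)
    (hinner : 0 ≤ ⟪v, u - v⟫) : u = v := by
  have hexpand : ‖u‖ ^ 2 = ‖v‖ ^ 2 + 2 * ⟪v, u - v⟫ + ‖u - v‖ ^ 2 := by
    conv_lhs => rw [← add_sub_cancel v u]
    exact norm_add_sq_real v (u - v)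
  rw [hnorm] at hexpand
  have : ‖u - v‖ ^ 2 = 0 := by linarith [sq_nonneg ‖u - v‖]
  simpa [sub_eq_zero] using this

end Reflection

namespace BasedRootSystem

variable {V : Type*} [NormedAddCommGroup V] [InnerProductSpace ℝ V] [FiniteDimensional ℝ V]
variable (P : BasedRootSystem V)

theorem mem_posRoots {β : V} : β ∈ P.posRoots ↔ β ∈ P.roots ∧ ∀ i, 0 ≤ P.b.repr β i := by
  simp [posRoots]

theorem simple_mem_posRoots (i : Fin P.rank) : P.b i ∈ P.posRoots := by
  refine P.mem_posRoots.mpr ⟨P.simple_mem i, fun j => ?_⟩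
  rw [P.b.repr_self, Finsupp.single_apply]
  split_ifs <;> norm_num

theorem exists_repr_pos_of_mem_posRoots {β : V} (h : β ∈ P.posRoots) :
    ∃ j, 0 < P.b.repr β j := by
  obtain ⟨hroot, hnonneg⟩ := P.mem_posRoots.mp h
  have hβ : P.b.repr β ≠ 0 := by
    rw [Ne, LinearEquiv.map_eq_zero_iff]
    exact fun h0 => P.zero_not_mem (h0 ▸ hroot)
  obtain ⟨j, hj⟩ := Finsupp.ne_iff.mp hβ
  exact ⟨j, (hnonneg j).lt_of_ne' hj⟩

theorem neg_notMem_posRoots {β : V} (h : β ∈ P.posRoots) : -β ∉ P.posRoots := by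
  obtain ⟨j, hj⟩ := P.exists_repr_pos_of_mem_posRoots h
  intro hneg
  have := (P.mem_posRoots.mp hneg).2 j
  simp only [map_neg, Finsupp.coe_neg, Pi.neg_apply, Left.nonneg_neg_iff] at this
  linarith

theorem eq_simple_of_repr_eq_zero {β : V} (hβ : β ∈ P.posRoots) (i : Fin P.rank)
    (h : ∀ j, j ≠ i → P.b.repr β j = 0) : β = P.b i := by
  obtain ⟨hroot, hnonneg⟩ := P.mem_posRoots.mp hβ
  have hsmul : β = P.b.repr β i • P.b i := by
    conv_lhs => rw [← P.b.sum_repr β]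
    exact Finset.sum_eq_single i (fun j _ hj => by rw [h j hj, zero_smul]) (by simp)
  rcases P.reduced _ (P.simple_mem i) _ (hsmul ▸ hroot) with h1 | h1
  · rwa [h1, one_smul] at hsmul
  · linarith [hnonneg i]

theorem sr_apply (i : Fin P.rank) (x : V) : P.sr i x = x - copair x (P.b i) • P.b i :=
  reflection_orthogonal_singleton_apply _ _

theorem sr_apply_sr (i : Fin P.rank) (x : V) : P.sr i (P.sr i x) = x :=
  Submodule.reflection_reflection _ _

theorem sr_mul_self (i : Fin P.rank) : P.sr i * P.sr i = 1 :=
  Submodule.reflection_mul_reflection _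

theorem sr_inv (i : Fin P.rank) : (P.sr i)⁻¹ = P.sr i :=
  Submodule.reflection_inv

theorem sr_apply_simple (i : Fin P.rank) : P.sr i (P.b i) = -P.b i :=
  Submodule.reflection_orthogonalComplement_singleton_eq_neg _

theorem sr_eq_conj {g : V ≃ₗᵢ[ℝ] V} {t i : Fin P.rank} (h : g (P.b t) = P.b i) :
    P.sr i = g * P.sr t * g⁻¹ :=
  reflection_orthogonal_singleton_eq_conj g h

theorem sr_apply_mem_roots (i : Fin P.rank) {β : V} (h : β ∈ P.roots) : P.sr i β ∈ P.roots :=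
  P.reflect_mem _ (P.simple_mem i) _ h

/-- A positive root other than `b i` has a positive coefficient at some `j ≠ i`, which the
simple reflection `sr i` does not change. -/
theorem sr_apply_mem_posRoots {β : V} {i : Fin P.rank} (hβ : β ∈ P.posRoots)
    (hne : β ≠ P.b i) : P.sr i β ∈ P.posRoots := by
  obtain ⟨j, hji, hjpos⟩ : ∃ j, j ≠ i ∧ 0 < P.b.repr β j := by
    by_contra! hc
    exact hne (P.eq_simple_of_repr_eq_zero hβ i fun j hji =>
      (hc j hji).antisymm ((P.mem_posRoots.mp hβ).2 j))
  have hroot : P.sr i β ∈ P.roots := P.sr_apply_mem_roots i (P.mem_posRoots.mp hβ).1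
  have hcoord : P.b.repr (P.sr i β) j = P.b.repr β j := by
    simp [P.sr_apply, Ne.symm hji]
  refine P.mem_posRoots.mpr ⟨hroot, ?_⟩
  rcases P.coeff_sign _ hroot with h | h
  · exact h
  · linarith [h j]

open Classical in
theorem sr_apply_mem_posRoots_erase {β : V} {i : Fin P.rank}
    (hβ : β ∈ P.posRoots.erase (P.b i)) : P.sr i β ∈ P.posRoots.erase (P.b i) := by
  rw [Finset.mem_erase] at hβ ⊢
  refine ⟨fun h => ?_, P.sr_apply_mem_posRoots hβ.2 hβ.1⟩
  have : β = -P.b i := by rw [← P.sr_apply_sr i β, h, P.sr_apply_simple]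
  exact P.neg_notMem_posRoots (P.simple_mem_posRoots i) (this ▸ hβ.2)

open Classical in
theorem sr_apply_rho (i : Fin P.rank) : P.sr i P.rho = P.rho - P.b i := by
  have hperm : ∑ β ∈ P.posRoots.erase (P.b i), P.sr i β = ∑ β ∈ P.posRoots.erase (P.b i), β :=
    Finset.sum_nbij' (P.sr i) (P.sr i) (fun _ => P.sr_apply_mem_posRoots_erase)
      (fun _ => P.sr_apply_mem_posRoots_erase) (fun β _ => P.sr_apply_sr i β)
      (fun β _ => P.sr_apply_sr i β) (fun _ _ => rfl)
  rw [rho, map_smul, map_sum, ← Finset.add_sum_erase _ _ (P.simple_mem_posRoots i),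
    ← Finset.add_sum_erase _ _ (P.simple_mem_posRoots i), P.sr_apply_simple, hperm]
  module

theorem copair_rho_simple (i : Fin P.rank) : copair P.rho (P.b i) = 1 := by
  have h := P.sr_apply_rho i
  rw [P.sr_apply, sub_right_inj] at h
  exact smul_left_injective ℝ (P.b.ne_zero i) (h.trans (one_smul ℝ _).symm)

theorem inner_rho_simple_pos (i : Fin P.rank) : 0 < ⟪P.rho, P.b i⟫ := by
  have h := P.copair_rho_simple i
  have hbb : 0 < ⟪P.b i, P.b i⟫ := real_inner_self_pos.mpr (P.b.ne_zero i)
  rw [copair, div_eq_one_iff_eq hbb.ne'] at h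
  linarith

theorem inner_eq_sum_repr (x γ : V) : ⟪x, γ⟫ = ∑ j, P.b.repr γ j * ⟪x, P.b j⟫ := by
  conv_lhs => rw [← P.b.sum_repr γ]
  simp only [inner_sum, real_inner_smul_right]

theorem inner_rho_pos {γ : V} (h : γ ∈ P.posRoots) : 0 < ⟪P.rho, γ⟫ := by
  obtain ⟨j, hj⟩ := P.exists_repr_pos_of_mem_posRoots h
  rw [P.inner_eq_sum_repr]
  exact Finset.sum_pos' (fun k _ => mul_nonneg ((P.mem_posRoots.mp h).2 k)
    (P.inner_rho_simple_pos k).le) ⟨j, Finset.mem_univ j, mul_pos hj (P.inner_rho_simple_pos j)⟩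

theorem mem_posRoots_of_inner_rho_pos {γ : V} (hγ : γ ∈ P.roots) (h : 0 < ⟪P.rho, γ⟫) :
    γ ∈ P.posRoots := by
  refine P.mem_posRoots.mpr ⟨hγ, ?_⟩
  rcases P.coeff_sign _ hγ with hs | hs
  · exact hs
  · rw [P.inner_eq_sum_repr] at h
    have : ∑ j, P.b.repr γ j * ⟪P.rho, P.b j⟫ ≤ 0 := Finset.sum_nonpos fun k _ =>
      mul_nonpos_of_nonpos_of_nonneg (hs k) (P.inner_rho_simple_pos k).le
    linarith

theorem apply_mem_posRoots_of_apply_rho {w : V ≃ₗᵢ[ℝ] V} (hw : ∀ β ∈ P.roots, w β ∈ P.roots)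
    (hρ : w P.rho = P.rho) {β : V} (hβ : β ∈ P.posRoots) : w β ∈ P.posRoots := by
  refine P.mem_posRoots_of_inner_rho_pos (hw β (P.mem_posRoots.mp hβ).1) ?_
  rw [← hρ, w.inner_map_map]
  exact P.inner_rho_pos hβ

theorem exists_list_of_mem_weylGroup {w : V ≃ₗᵢ[ℝ] V} (h : w ∈ P.weylGroup) :
    ∃ L : List (Fin P.rank), w = (L.map P.sr).prod := by
  induction h using Subgroup.closure_induction'' with
  | mem x hx => obtain ⟨i, rfl⟩ := hx; exact ⟨[i], by simp⟩
  | inv_mem x hx => obtain ⟨i, rfl⟩ := hx; exact ⟨[i], by simp [P.sr_inv]⟩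
  | one => exact ⟨[], by simp⟩
  | mul x y _ _ ihx ihy =>
    obtain ⟨Lx, rfl⟩ := ihx
    obtain ⟨Ly, rfl⟩ := ihy
    exact ⟨Lx ++ Ly, by simp⟩

theorem listProd_apply_mem_roots (L : List (Fin P.rank)) {β : V} (h : β ∈ P.roots) :
    (L.map P.sr).prod β ∈ P.roots := by
  induction L with
  | nil => simpa using h
  | cons i L ih => simpa using P.sr_apply_mem_roots i ih

/-- The deleted letter is the first `i`, reading from the right, at which the image of `b t`
turns negative: that image is then `b i`, so `sr i` is the conjugate of `sr t`. -/
theorem exists_shorter_list_of_apply_simple_notMem_posRoots (L : List (Fin P.rank))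
    (t : Fin P.rank) (h : (L.map P.sr).prod (P.b t) ∉ P.posRoots) :
    ∃ M : List (Fin P.rank), M.length + 1 = L.length ∧
      (M.map P.sr).prod = (L.map P.sr).prod * P.sr t := by
  induction L with
  | nil => exact absurd (by simpa using P.simple_mem_posRoots t) h
  | cons i L ih =>
    rw [List.map_cons, List.prod_cons] at h ⊢
    by_cases hL : (L.map P.sr).prod (P.b t) ∈ P.posRoots
    · have himage : (L.map P.sr).prod (P.b t) = P.b i := by
        by_contra hc
        exact h (P.sr_apply_mem_posRoots hL hc)
      refine ⟨L, by simp, ?_⟩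
      simp [P.sr_eq_conj himage, mul_assoc, P.sr_mul_self]
    · obtain ⟨M, hlen, hM⟩ := ih hL
      exact ⟨i :: M, by simp [← hlen], by simp [hM, mul_assoc]⟩

theorem listProd_eq_one_of_apply_rho (L : List (Fin P.rank))
    (hρ : (L.map P.sr).prod P.rho = P.rho) : (L.map P.sr).prod = 1 := by
  rcases L.eq_nil_or_concat' with rfl | ⟨L', t, rfl⟩
  · simp
  have hsplit : ((L' ++ [t]).map P.sr).prod = (L'.map P.sr).prod * P.sr t := by simp
  have hpos : ((L' ++ [t]).map P.sr).prod (P.b t) ∈ P.posRoots :=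
    P.apply_mem_posRoots_of_apply_rho (fun _ => P.listProd_apply_mem_roots _) hρ
      (P.simple_mem_posRoots t)
  have hneg : (L'.map P.sr).prod (P.b t) ∉ P.posRoots := by
    have : (L'.map P.sr).prod (P.b t) = -((L' ++ [t]).map P.sr).prod (P.b t) := by
      rw [hsplit, LinearIsometryEquiv.coe_mul, Function.comp_apply, P.sr_apply_simple, map_neg,
        neg_neg]
    exact this ▸ P.neg_notMem_posRoots hpos
  obtain ⟨M, hlen, hM⟩ := P.exists_shorter_list_of_apply_simple_notMem_posRoots L' t hneg
  rw [hsplit, ← hM] at hρ ⊢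
  exact listProd_eq_one_of_apply_rho M hρ
termination_by L.length
decreasing_by grind

theorem apply_rho_injOn_weylGroup : Set.InjOn (fun w : V ≃ₗᵢ[ℝ] V => w P.rho) P.weylGroup := by
  intro w₁ hw₁ w₂ hw₂ h
  obtain ⟨L, hL⟩ := P.exists_list_of_mem_weylGroup (mul_mem (inv_mem hw₁) hw₂)
  have hρ : (L.map P.sr).prod P.rho = P.rho := by
    rw [← hL, LinearIsometryEquiv.coe_mul, Function.comp_apply]
    exact (w₁.symm_apply_eq).mpr h.symm
  rw [← inv_mul_eq_one, hL]
  exact P.listProd_eq_one_of_apply_rho L hρ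

theorem repr_nonneg_of_mem_Qplus {x : V} (hx : x ∈ P.Qplus) (i : Fin P.rank) :
    0 ≤ P.b.repr x i := by
  induction hx using AddSubmonoid.closure_induction with
  | mem y hy =>
    obtain ⟨j, rfl⟩ := hy
    rw [P.b.repr_self, Finsupp.single_apply]
    split_ifs <;> norm_num
  | zero => simp
  | add y z _ _ hy hz => simpa using add_nonneg hy hz

theorem repr_eq_zero_of_mem_QS {S : Set (Fin P.rank)} {x : V} (hx : x ∈ P.QS S)
    {i : Fin P.rank} (hi : i ∉ S) : P.b.repr x i = 0 := by
  induction hx using AddSubgroup.closure_induction with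
  | mem y hy =>
    obtain ⟨j, hj, rfl⟩ := hy
    rw [P.b.repr_self, Finsupp.single_apply, if_neg (ne_of_mem_of_not_mem hj hi)]
  | zero => simp
  | add y z _ _ hy hz => simp [hy, hz]
  | neg y _ hy => simp [hy]

/-- For `j ∈ S`, `w⁻¹ (b j)` is a positive root, so `⟪w ρ, b j⟫ > 0`. -/
theorem inner_apply_rho_nonneg_of_mem_WS {S : Set (Fin P.rank)} {w : V ≃ₗᵢ[ℝ] V}
    (hw : w ∈ P.WS S) {x : V} (hS : x ∈ P.QS S) (hx : x ∈ P.Qplus) : 0 ≤ ⟪w P.rho, x⟫ := by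
  rw [P.inner_eq_sum_repr]
  refine Finset.sum_nonneg fun j _ => ?_
  by_cases hj : j ∈ S
  · obtain ⟨γ, hγ, hwγ⟩ := hw.2 (P.b j) (P.simple_mem_posRoots j)
      (AddSubgroup.subset_closure ⟨j, hj, rfl⟩)
    rw [← hwγ, w.inner_map_map]
    exact mul_nonneg (P.repr_nonneg_of_mem_Qplus hx j) (P.inner_rho_pos hγ).le
  · rw [P.repr_eq_zero_of_mem_QS hS hj, zero_mul]

end BasedRootSystem

theorem dotZero_sub_dotZero_not_mem_QSplus_general
    {V : Type*} [NormedAddCommGroup V] [InnerProductSpace ℝ V] [FiniteDimensional ℝ V]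
    (P : BasedRootSystem V) (s : Fin P.rank)
    (w1 w2 : V ≃ₗᵢ[ℝ] V)
    (hw1 : w1 ∈ P.WS {i | i ≠ s}) (hw2 : w2 ∈ P.WS {i | i ≠ s})
    (hne : w1 ≠ w2) :
    ¬ (P.dotZero w1 - P.dotZero w2 ∈ P.QS {i | i ≠ s} ∧
        P.dotZero w1 - P.dotZero w2 ∈ P.Qplus) := by
  rintro ⟨hQS, hQplus⟩
  have hdiff : P.dotZero w1 - P.dotZero w2 = w1 P.rho - w2 P.rho := by
    simp only [BasedRootSystem.dotZero, sub_sub_sub_cancel_right]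
  rw [hdiff] at hQS hQplus
  have hρ : w1 P.rho = w2 P.rho :=
    eq_of_norm_eq_of_inner_sub_nonneg (by rw [w1.norm_map, w2.norm_map])
      (P.inner_apply_rho_nonneg_of_mem_WS hw2 hQS hQplus)
  exact hne (P.apply_rho_injOn_weylGroup hw1.1 hw2.1 hρ)

/-- If `w1, w2 ∈ W^S` are distinct of equal length, then
`w1.0 - w2.0 ∉ Q_S^+ = Q_S ∩ Q^+`. -/
theorem dotZero_sub_dotZero_not_mem_QSplus
    {V : Type*} [NormedAddCommGroup V] [InnerProductSpace ℝ V] [FiniteDimensional ℝ V]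
    (P : BasedRootSystem V) (hirr : P.Irred) (s : Fin P.rank)
    (hcom : ∀ β ∈ P.posRoots, P.b.repr β s ≤ 1)
    (w1 w2 : V ≃ₗᵢ[ℝ] V)
    (hw1 : w1 ∈ P.WS {i | i ≠ s}) (hw2 : w2 ∈ P.WS {i | i ≠ s})
    (hlen : P.len w1 = P.len w2) (hne : w1 ≠ w2) :
    ¬ (P.dotZero w1 - P.dotZero w2 ∈ P.QS {i | i ≠ s} ∧
        P.dotZero w1 - P.dotZero w2 ∈ P.Qplus) :=
  dotZero_sub_dotZero_not_mem_QSplus_general P s w1 w2 hw1 hw2 hne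

end
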